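/- arXiv:1101.3080 — 5 statements merged into one kernel-verified Lean document; each statement's English description precedes it below -/
import Mathlib

section
/- If S is a regular Γ-semigroup (for every c∈S there exist x∈S and γ₁,γ₂∈Γ with c = cγ₁xγ₂c), then for any two intuitionistic fuzzy subsets A, B of S, A∩B ⊆ A∘B. -/
open Classical

noncomputable def compMu {S Γ : Type*} (mul : S → Γ → S → S) (μA μB : S → ℝ) (x : S) : ℝ :=
  if (∃ u : S, ∃ γ : Γ, ∃ v : S, x = mul u γ v) then
    sSup {r : ℝ | ∃ u : S, ∃ γ : Γ, ∃ v : S, x = mul u γ v ∧ r = min (μA u) (μB v)}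
  else 0

noncomputable def compNu {S Γ : Type*} (mul : S → Γ → S → S) (νA νB : S → ℝ) (x : S) : ℝ :=
  if (∃ u : S, ∃ γ : Γ, ∃ v : S, x = mul u γ v) then
    sInf {r : ℝ | ∃ u : S, ∃ γ : Γ, ∃ v : S, x = mul u γ v ∧ r = max (νA u) (νB v)}
  else 1

theorem stmt_8 {S Γ : Type*} (mul : S → Γ → S → S) (gmul : Γ → S → Γ → Γ)
    (hassoc : ∀ (a b c : S) (α β : Γ),
      mul (mul a α b) β c = mul a (gmul α b β) c ∧
      mul a (gmul α b β) c = mul a α (mul b β c))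
    (hreg : ∀ c : S, ∃ x : S, ∃ γ₁ γ₂ : Γ, c = mul (mul c γ₁ x) γ₂ c)
    (μA νA μB νB : S → ℝ)
    (hrangeA : ∀ x, 0 ≤ μA x ∧ μA x ≤ 1 ∧ 0 ≤ νA x ∧ νA x ≤ 1 ∧ μA x + νA x ≤ 1)
    (hrangeB : ∀ x, 0 ≤ μB x ∧ μB x ≤ 1 ∧ 0 ≤ νB x ∧ νB x ≤ 1 ∧ μB x + νB x ≤ 1) :
    ∀ x : S, min (μA x) (μB x) ≤ compMu mul μA μB x ∧
      compNu mul νA νB x ≤ max (νA x) (νB x) := by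
  intro x
  obtain ⟨y, γ₁, γ₂, hx⟩ := hreg x
  have hx' : x = mul x (gmul γ₁ y γ₂) x := by
    conv_lhs => rw [hx, (hassoc x y x γ₁ γ₂).1]
  have hdec : ∃ u : S, ∃ γ : Γ, ∃ v : S, x = mul u γ v := ⟨x, gmul γ₁ y γ₂, x, hx'⟩
  constructor
  · rw [compMu, if_pos hdec]
    apply le_csSup
    · refine ⟨1, ?_⟩
      rintro r ⟨u, γ, v, _, rfl⟩
      exact le_trans (min_le_left _ _) (hrangeA u).2.1
    · exact ⟨x, gmul γ₁ y γ₂, x, hx', rfl⟩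
  · rw [compNu, if_pos hdec]
    apply csInf_le
    · refine ⟨0, ?_⟩
      rintro r ⟨u, γ, v, _, rfl⟩
      exact le_trans (hrangeA u).2.2.1 (le_max_left _ _)
    · exact ⟨x, gmul γ₁ y γ₂, x, hx', rfl⟩
end

section
/- A Γ-semigroup S is regular if and only if A∘B = A∩B for every intuitionistic fuzzy right ideal A and every intuitionistic fuzzy left ideal B of S. -/
open Classical

theorem stmt_9 {S Γ : Type*} (mul : S → Γ → S → S) (gmul : Γ → S → Γ → Γ)
    (hassoc : ∀ (a b c : S) (α β : Γ),
      mul (mul a α b) β c = mul a (gmul α b β) c ∧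
      mul a (gmul α b β) c = mul a α (mul b β c)) :
    (∀ c : S, ∃ x : S, ∃ γ₁ γ₂ : Γ, c = mul (mul c γ₁ x) γ₂ c) ↔
      (∀ μA νA μB νB : S → ℝ,
        (∀ x, 0 ≤ μA x ∧ μA x ≤ 1 ∧ 0 ≤ νA x ∧ νA x ≤ 1 ∧ μA x + νA x ≤ 1) →
        (∀ x, 0 ≤ μB x ∧ μB x ≤ 1 ∧ 0 ≤ νB x ∧ νB x ≤ 1 ∧ μB x + νB x ≤ 1) →
        (∀ x : S, ∀ γ : Γ, ∀ y : S, μA x ≤ μA (mul x γ y) ∧ νA (mul x γ y) ≤ νA x) →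
        (∀ x : S, ∀ γ : Γ, ∀ y : S, μB y ≤ μB (mul x γ y) ∧ νB (mul x γ y) ≤ νB y) →
        ∀ x : S, compMu mul μA μB x = min (μA x) (μB x) ∧
          compNu mul νA νB x = max (νA x) (νB x)) := by
  constructor
  · intro hreg μA νA μB νB hA hB hrA hlB x
    obtain ⟨y, γ₁, γ₂, hx⟩ := hreg x
    have hdec : ∃ u : S, ∃ γ : Γ, ∃ v : S, x = mul u γ v := ⟨mul x γ₁ y, γ₂, x, hx⟩
    constructor
    · rw [compMu, if_pos hdec]
      set T := {r : ℝ | ∃ u : S, ∃ γ : Γ, ∃ v : S, x = mul u γ v ∧ r = min (μA u) (μB v)}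
      have hub : ∀ r ∈ T, r ≤ min (μA x) (μB x) := by
        rintro r ⟨u, γ, v, huv, rfl⟩
        have h1 : μA u ≤ μA x := huv ▸ (hrA u γ v).1
        have h2 : μB v ≤ μB x := huv ▸ (hlB u γ v).1
        exact min_le_min h1 h2
      have hmem : min (μA (mul x γ₁ y)) (μB x) ∈ T := ⟨mul x γ₁ y, γ₂, x, hx, rfl⟩
      have hge : min (μA x) (μB x) ≤ min (μA (mul x γ₁ y)) (μB x) :=
        min_le_min (hrA x γ₁ y).1 le_rfl
      exact le_antisymm (csSup_le ⟨_, hmem⟩ hub)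
        (le_trans hge (le_csSup ⟨_, hub⟩ hmem))
    · rw [compNu, if_pos hdec]
      set T := {r : ℝ | ∃ u : S, ∃ γ : Γ, ∃ v : S, x = mul u γ v ∧ r = max (νA u) (νB v)}
      have hlb : ∀ r ∈ T, max (νA x) (νB x) ≤ r := by
        rintro r ⟨u, γ, v, huv, rfl⟩
        have h1 : νA x ≤ νA u := huv ▸ (hrA u γ v).2
        have h2 : νB x ≤ νB v := huv ▸ (hlB u γ v).2
        exact max_le_max h1 h2
      have hmem : max (νA (mul x γ₁ y)) (νB x) ∈ T := ⟨mul x γ₁ y, γ₂, x, hx, rfl⟩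
      have hle : max (νA (mul x γ₁ y)) (νB x) ≤ max (νA x) (νB x) :=
        max_le_max (hrA x γ₁ y).2 le_rfl
      exact le_antisymm (le_trans (csInf_le ⟨_, hlb⟩ hmem) hle)
        (le_csInf ⟨_, hmem⟩ hlb)
  · intro h c
    set R : S → Prop := fun z => z = c ∨ ∃ δ : Γ, ∃ s : S, z = mul c δ s with hR
    set L : S → Prop := fun z => z = c ∨ ∃ s : S, ∃ δ : Γ, z = mul s δ c with hL
    have hRclosed : ∀ x : S, ∀ γ : Γ, ∀ y : S, R x → R (mul x γ y) := by
      rintro x γ y (rfl | ⟨δ, s, rfl⟩)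
      · exact Or.inr ⟨γ, y, rfl⟩
      · exact Or.inr ⟨gmul δ s γ, y, (hassoc c s y δ γ).1⟩
    have hLclosed : ∀ x : S, ∀ γ : Γ, ∀ y : S, L y → L (mul x γ y) := by
      rintro x γ y (rfl | ⟨s, δ, rfl⟩)
      · exact Or.inr ⟨x, γ, rfl⟩
      · exact Or.inr ⟨mul x γ s, δ, ((hassoc x s c γ δ).1.trans (hassoc x s c γ δ).2).symm⟩
    set μA : S → ℝ := fun z => if R z then 1 else 0 with hμA
    set νA : S → ℝ := fun z => if R z then 0 else 1 with hνA
    set μB : S → ℝ := fun z => if L z then 1 else 0 with hμB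
    set νB : S → ℝ := fun z => if L z then 0 else 1 with hνB
    have hA : ∀ x, 0 ≤ μA x ∧ μA x ≤ 1 ∧ 0 ≤ νA x ∧ νA x ≤ 1 ∧ μA x + νA x ≤ 1 := by
      intro x; by_cases hx : R x <;> simp [hμA, hνA, hx]
    have hB : ∀ x, 0 ≤ μB x ∧ μB x ≤ 1 ∧ 0 ≤ νB x ∧ νB x ≤ 1 ∧ μB x + νB x ≤ 1 := by
      intro x; by_cases hx : L x <;> simp [hμB, hνB, hx]
    have hrA : ∀ x : S, ∀ γ : Γ, ∀ y : S, μA x ≤ μA (mul x γ y) ∧ νA (mul x γ y) ≤ νA x := by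
      intro x γ y
      by_cases hx : R x
      · simp [hμA, hνA, hx, hRclosed x γ y hx]
      · by_cases hxy : R (mul x γ y) <;> simp [hμA, hνA, hx, hxy]
    have hlB : ∀ x : S, ∀ γ : Γ, ∀ y : S, μB y ≤ μB (mul x γ y) ∧ νB (mul x γ y) ≤ νB y := by
      intro x γ y
      by_cases hy : L y
      · simp [hμB, hνB, hy, hLclosed x γ y hy]
      · by_cases hxy : L (mul x γ y) <;> simp [hμB, hνB, hy, hxy]
    have hμ := (h μA νA μB νB hA hB hrA hlB c).1
    have hRc : R c := Or.inl rfl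
    have hLc : L c := Or.inl rfl
    have hμc : compMu mul μA μB c = 1 := by
      rw [hμ]; simp [hμA, hμB, hRc, hLc]
    rw [compMu] at hμc
    by_cases hdec : ∃ u : S, ∃ γ : Γ, ∃ v : S, c = mul u γ v
    · rw [if_pos hdec] at hμc
      set T := {r : ℝ | ∃ u : S, ∃ γ : Γ, ∃ v : S, c = mul u γ v ∧ r = min (μA u) (μB v)}
      have hTne : T.Nonempty := by
        obtain ⟨u, γ, v, huv⟩ := hdec
        exact ⟨min (μA u) (μB v), u, γ, v, huv, rfl⟩
      have hlt : (1 / 2 : ℝ) < sSup T := by rw [hμc]; norm_num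
      obtain ⟨r, ⟨u, γ, v, huv, rfl⟩, hr⟩ := exists_lt_of_lt_csSup hTne hlt
      have hRu : R u := by
        by_contra hu
        simp only [hμA, hu, if_false] at hr
        have : min (0 : ℝ) (μB v) ≤ 0 := min_le_left _ _
        linarith
      have hLv : L v := by
        by_contra hv
        simp only [hμB, hv, if_false] at hr
        have : min (μA u) (0 : ℝ) ≤ 0 := min_le_right _ _
        linarith
      rcases hRu with hu | ⟨δ, s, hu⟩ <;> rw [hu] at huv
      · rcases hLv with hv | ⟨s, δ, hv⟩ <;> rw [hv] at huv
        · refine ⟨c, γ, γ, ?_⟩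
          have h1 : mul (mul c γ c) γ c = mul c γ c := by conv_lhs => rw [← huv]
          exact huv.trans h1.symm
        · refine ⟨s, γ, δ, ?_⟩
          have e : mul (mul c γ s) δ c = mul c γ (mul s δ c) :=
            (hassoc c s c γ δ).1.trans (hassoc c s c γ δ).2
          exact huv.trans e.symm
      · rcases hLv with hv | ⟨t, ε, hv⟩ <;> rw [hv] at huv
        · exact ⟨s, δ, γ, huv⟩
        · refine ⟨t, gmul δ s γ, ε, ?_⟩
          have e1 : mul (mul (mul c δ s) γ t) ε c = mul (mul c δ s) γ (mul t ε c) :=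
            (hassoc _ _ _ _ _).1.trans (hassoc _ _ _ _ _).2
          have e2 : mul (mul c δ s) γ t = mul c (gmul δ s γ) t := (hassoc c s t δ γ).1
          rw [← e2, e1]
          exact huv
    · rw [if_neg hdec] at hμc
      norm_num at hμc
end

section
/- If A=(μ_A,ν_A) is an intuitionistic fuzzy prime ideal of a Γ-semigroup S, then for every t∈[0,1], the non-empty level cuts U(μ_A;t)={x:μ_A(x)≥t} and L(ν_A;t)={x:ν_A(x)≤t} are prime ideals of S. -/
/-- Intuitionistic fuzzy (two-sided) ideal of a Γ-semigroup. -/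
def IsIFI {S Γ : Type*} (mul : S → Γ → S → S) (μ ν : S → ℝ) : Prop :=
  ∀ x : S, ∀ γ : Γ, ∀ y : S,
    max (μ x) (μ y) ≤ μ (mul x γ y) ∧ ν (mul x γ y) ≤ min (ν x) (ν y)

/-- Intuitionistic fuzzy prime ideal. -/
def IsIFPI {S Γ : Type*} [Nonempty Γ] (mul : S → Γ → S → S) (μ ν : S → ℝ) : Prop :=
  IsIFI mul μ ν ∧ ∀ x y : S,
    (⨅ γ : Γ, μ (mul x γ y)) = max (μ x) (μ y) ∧
    (⨆ γ : Γ, ν (mul x γ y)) = min (ν x) (ν y)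

/-- A (two-sided) ideal of a Γ-semigroup, as a subset. -/
def IsIdeal {S Γ : Type*} (mul : S → Γ → S → S) (I : Set S) : Prop :=
  (∀ x : S, ∀ γ : Γ, ∀ y ∈ I, mul x γ y ∈ I) ∧
  (∀ x ∈ I, ∀ γ : Γ, ∀ y : S, mul x γ y ∈ I)

/-- A prime ideal of a Γ-semigroup. -/
def IsPrimeIdeal {S Γ : Type*} (mul : S → Γ → S → S) (I : Set S) : Prop :=
  IsIdeal mul I ∧ ∀ x y : S, (∀ γ : Γ, mul x γ y ∈ I) → x ∈ I ∨ y ∈ I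

theorem stmt_10 {S Γ : Type*} [Nonempty Γ] (mul : S → Γ → S → S) (μ ν : S → ℝ)
    (hrange : ∀ x, 0 ≤ μ x ∧ μ x ≤ 1 ∧ 0 ≤ ν x ∧ ν x ≤ 1 ∧ μ x + ν x ≤ 1)
    (hIFPI : IsIFPI mul μ ν) :
    ∀ t ∈ Set.Icc (0 : ℝ) 1,
      (({z : S | t ≤ μ z}).Nonempty → IsPrimeIdeal mul {z : S | t ≤ μ z}) ∧
      (({z : S | ν z ≤ t}).Nonempty → IsPrimeIdeal mul {z : S | ν z ≤ t}) := by
  intro t _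
  obtain ⟨hIFI, hprime⟩ := hIFPI
  constructor
  · intro _
    refine ⟨⟨?_, ?_⟩, ?_⟩
    · intro x γ y hy
      exact le_trans (le_trans hy (le_max_right _ _)) (hIFI x γ y).1
    · intro x hx γ y
      exact le_trans (le_trans hx (le_max_left _ _)) (hIFI x γ y).1
    · intro x y h
      have h1 : t ≤ max (μ x) (μ y) := by
        rw [← (hprime x y).1]
        exact le_ciInf h
      rcases max_cases (μ x) (μ y) with ⟨he, _⟩ | ⟨he, _⟩
      · left; rw [Set.mem_setOf_eq, ← he]; exact h1
      · right; rw [Set.mem_setOf_eq, ← he]; exact h1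
  · intro _
    refine ⟨⟨?_, ?_⟩, ?_⟩
    · intro x γ y hy
      exact le_trans (hIFI x γ y).2 (le_trans (min_le_right _ _) hy)
    · intro x hx γ y
      exact le_trans (hIFI x γ y).2 (le_trans (min_le_left _ _) hx)
    · intro x y h
      have h1 : min (ν x) (ν y) ≤ t := by
        rw [← (hprime x y).2]
        exact ciSup_le h
      rcases min_cases (ν x) (ν y) with ⟨he, _⟩ | ⟨he, _⟩
      · left; rw [Set.mem_setOf_eq, ← he]; exact h1
      · right; rw [Set.mem_setOf_eq, ← he]; exact h1
end

section
/- Let A=(μ_A,ν_A) be an intuitionistic fuzzy ideal of a Γ-semigroup S such that for every t∈[0,1] the non-empty level cuts U(μ_A;t) and L(ν_A;t) are prime ideals of S. Then A is an intuitionistic fuzzy prime ideal of S. -/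
theorem stmt_11 {S Γ : Type*} [Nonempty Γ] (mul : S → Γ → S → S) (μ ν : S → ℝ)
    (hrange : ∀ x, 0 ≤ μ x ∧ μ x ≤ 1 ∧ 0 ≤ ν x ∧ ν x ≤ 1 ∧ μ x + ν x ≤ 1)
    (hIFI : IsIFI mul μ ν)
    (hU : ∀ t ∈ Set.Icc (0 : ℝ) 1,
      ({z : S | t ≤ μ z}).Nonempty → IsPrimeIdeal mul {z : S | t ≤ μ z})
    (hL : ∀ t ∈ Set.Icc (0 : ℝ) 1,
      ({z : S | ν z ≤ t}).Nonempty → IsPrimeIdeal mul {z : S | ν z ≤ t}) :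
    ∀ x y : S,
      (⨅ γ : Γ, μ (mul x γ y)) = max (μ x) (μ y) ∧
      (⨆ γ : Γ, ν (mul x γ y)) = min (ν x) (ν y) := by

  intro x y
  obtain ⟨γ₀⟩ := ‹Nonempty Γ›
  have hbdd : BddBelow (Set.range fun γ : Γ => μ (mul x γ y)) :=
    ⟨0, by rintro _ ⟨γ, rfl⟩; exact (hrange _).1⟩
  have hbdd' : BddAbove (Set.range fun γ : Γ => ν (mul x γ y)) :=
    ⟨1, by rintro _ ⟨γ, rfl⟩; exact (hrange _).2.2.2.1⟩
  constructor
  · have h1 : max (μ x) (μ y) ≤ ⨅ γ : Γ, μ (mul x γ y) :=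
      le_ciInf fun γ => (hIFI x γ y).1
    refine le_antisymm ?_ h1
    set t := ⨅ γ : Γ, μ (mul x γ y) with ht
    have htI : t ∈ Set.Icc (0 : ℝ) 1 := by
      constructor
      · exact le_trans ((hrange x).1.trans (le_max_left _ _)) h1
      · exact (ciInf_le hbdd γ₀).trans (hrange _).2.1
    have hmem : ∀ γ : Γ, mul x γ y ∈ {z : S | t ≤ μ z} := fun γ => ciInf_le hbdd γ
    have hne : ({z : S | t ≤ μ z}).Nonempty := ⟨mul x γ₀ y, hmem γ₀⟩
    rcases (hU t htI hne).2 x y hmem with h | h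
    · exact le_max_of_le_left h
    · exact le_max_of_le_right h
  · have h1 : (⨆ γ : Γ, ν (mul x γ y)) ≤ min (ν x) (ν y) :=
      ciSup_le fun γ => (hIFI x γ y).2
    refine le_antisymm h1 ?_
    set t := ⨆ γ : Γ, ν (mul x γ y) with ht
    have htI : t ∈ Set.Icc (0 : ℝ) 1 := by
      constructor
      · exact le_trans (hrange _).2.2.1 (le_ciSup hbdd' γ₀)
      · exact h1.trans ((min_le_left _ _).trans (hrange x).2.2.2.1)
    have hmem : ∀ γ : Γ, mul x γ y ∈ {z : S | ν z ≤ t} := fun γ => le_ciSup hbdd' γ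
    have hne : ({z : S | ν z ≤ t}).Nonempty := ⟨mul x γ₀ y, hmem γ₀⟩
    rcases (hL t htI hne).2 x y hmem with h | h
    · exact min_le_of_left_le h
    · exact min_le_of_right_le h
end

section
/- Let S be a commutative Γ-semigroup, A=(μ_A,ν_A) an intuitionistic fuzzy prime ideal of S, and x∈S. Then the extension ⟨x,A⟩, with ⟨x,μ_A⟩(y)=inf_{γ∈Γ} μ_A(xγy) and ⟨x,ν_A⟩(y)=sup_{γ∈Γ} ν_A(xγy), is an intuitionistic fuzzy prime ideal of S. -/
theorem stmt_14 {S Γ : Type*} [Nonempty Γ] (mul : S → Γ → S → S)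
    (hcomm : ∀ a b : S, ∀ γ : Γ, mul a γ b = mul b γ a)
    (μ ν : S → ℝ)
    (hrange : ∀ x, 0 ≤ μ x ∧ μ x ≤ 1 ∧ 0 ≤ ν x ∧ ν x ≤ 1 ∧ μ x + ν x ≤ 1)
    (hIFPI : IsIFPI mul μ ν) (x : S) :
    IsIFPI mul (fun y => ⨅ γ : Γ, μ (mul x γ y)) (fun y => ⨆ γ : Γ, ν (mul x γ y)) := by
  have hμ : ∀ y, (⨅ γ : Γ, μ (mul x γ y)) = max (μ x) (μ y) := fun y => (hIFPI.2 x y).1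
  have hν : ∀ y, (⨆ γ : Γ, ν (mul x γ y)) = min (ν x) (ν y) := fun y => (hIFPI.2 x y).2
  constructor
  · intro a γ b
    have h := hIFPI.1 a γ b
    simp only [hμ, hν]
    constructor
    · calc max (max (μ x) (μ a)) (max (μ x) (μ b))
          = max (max (μ x) (μ x)) (max (μ a) (μ b)) := max_max_max_comm _ _ _ _
        _ = max (μ x) (max (μ a) (μ b)) := by rw [max_self]
        _ ≤ max (μ x) (μ (mul a γ b)) := max_le_max le_rfl h.1
    · calc min (ν x) (ν (mul a γ b))
          ≤ min (ν x) (min (ν a) (ν b)) := min_le_min le_rfl h.2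
        _ = min (min (ν x) (ν x)) (min (ν a) (ν b)) := by rw [min_self]
        _ = min (min (ν x) (ν a)) (min (ν x) (ν b)) := min_min_min_comm _ _ _ _
  · intro a b
    simp only [hμ, hν]
    have hbb : BddBelow (Set.range fun γ : Γ => μ (mul a γ b)) :=
      ⟨0, by rintro r ⟨γ, rfl⟩; exact (hrange _).1⟩
    have hba : BddAbove (Set.range fun γ : Γ => ν (mul a γ b)) :=
      ⟨1, by rintro r ⟨γ, rfl⟩; exact (hrange _).2.2.2.1⟩
    have Mμ : Monotone (fun t : ℝ => max (μ x) t) := fun p q h => max_le_max le_rfl h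
    have Mν : Monotone (fun t : ℝ => min (ν x) t) := fun p q h => min_le_min le_rfl h
    constructor
    · calc (⨅ γ : Γ, max (μ x) (μ (mul a γ b)))
          = max (μ x) (⨅ γ : Γ, μ (mul a γ b)) :=
            (Mμ.map_ciInf_of_continuousAt
              ((continuous_const.max continuous_id).continuousAt) hbb).symm
        _ = max (μ x) (max (μ a) (μ b)) := by rw [(hIFPI.2 a b).1]
        _ = max (max (μ x) (μ a)) (max (μ x) (μ b)) := by
            rw [max_max_max_comm, max_self]
    · calc (⨆ γ : Γ, min (ν x) (ν (mul a γ b)))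
          = min (ν x) (⨆ γ : Γ, ν (mul a γ b)) :=
            (Mν.map_ciSup_of_continuousAt
              ((continuous_const.min continuous_id).continuousAt) hba).symm
        _ = min (ν x) (min (ν a) (ν b)) := by rw [(hIFPI.2 a b).2]
        _ = min (min (ν x) (ν a)) (min (ν x) (ν b)) := by
            rw [min_min_min_comm, min_self]
end
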